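/- arXiv:2409.03744 — 2 statements merged into one kernel-verified Lean document; each statement's English description precedes it below -/
import Mathlib

section
/- Let S be a (possibly non-unitary) operator on a finite-dimensional Hilbert space, and let R_1,...,R_m be operators with probability distribution p_1,...,p_m satisfying ‖R_j − S‖ ≤ a for all j and ‖∑_j p_j R_j − S‖ ≤ b. Then for every density matrix ρ, ‖∑_j p_j R_j ρ R_j† − S ρ S†‖₁ ≤ a² + 2b‖S‖. -/
/-!
With `E j = R j - S` and `E = ∑ j, p j • E j`, the operator in question is
`∑ j, p j • E j ρ (E j)ᴴ + E ρ Sᴴ + S ρ Eᴴ`. Its trace norm is the value of the real-linear pairing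
`A ↦ ∑ i, re ⟪u i, A (v i)⟫` for `v` an eigenbasis of `Aᴴ A` and `u i` the normalised `A (v i)`,
and every such pairing of `X ρ Yᴴ` is at most `‖X‖ ‖Y‖ tr ρ`: writing `ρ = σ * σ` gives
`X ρ Yᴴ = (X σ) (Y σ)ᴴ`, and Cauchy–Schwarz with Bessel's inequality bounds the pairing by the
Hilbert–Schmidt norms of `X σ` and `Y σ`, which are at most `‖X‖ √(tr ρ)` and `‖Y‖ √(tr ρ)`.
-/

open Matrix
open scoped ComplexOrder

noncomputable def opNorm {n : Type*} [Fintype n] [DecidableEq n] (A : Matrix n n ℂ) : ℝ :=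
  ‖Matrix.toEuclideanCLM (𝕜 := ℂ) A‖

noncomputable def traceNorm {n : Type*} [Fintype n] [DecidableEq n] (A : Matrix n n ℂ) : ℝ :=
  (((Matrix.posSemidef_conjTranspose_mul_self A).1.eigenvectorUnitary : Matrix n n ℂ) *
    diagonal (((↑) : ℝ → ℂ) ∘ (√·) ∘ (Matrix.posSemidef_conjTranspose_mul_self A).1.eigenvalues) *
    (star (Matrix.posSemidef_conjTranspose_mul_self A).1.eigenvectorUnitary : Matrix n n ℂ)).trace.re

open scoped InnerProductSpace InnerProduct

section InnerProductSpace

variable {𝕜 ι κ E F G : Type*} [RCLike 𝕜]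
  [NormedAddCommGroup E] [InnerProductSpace 𝕜 E] [NormedAddCommGroup F] [InnerProductSpace 𝕜 F]

theorem Orthonormal.sum_sq_norm_inner_le_of_support [Fintype ι] {u : ι → E}
    (hu : Orthonormal 𝕜 fun i : {i // u i ≠ 0} ↦ u i) (x : E) :
    ∑ i, ‖⟪u i, x⟫_𝕜‖ ^ 2 ≤ ‖x‖ ^ 2 := by
  classical
  calc ∑ i, ‖⟪u i, x⟫_𝕜‖ ^ 2 = ∑ i : {i // u i ≠ 0}, ‖⟪u i, x⟫_𝕜‖ ^ 2 := by
        rw [← Finset.sum_subtype (Finset.univ.filter (u · ≠ 0)) (by simp)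
          (fun i ↦ ‖⟪u i, x⟫_𝕜‖ ^ 2), Finset.sum_filter]
        exact Finset.sum_congr rfl fun i _ ↦ by split_ifs with h <;> simp_all
    _ ≤ ‖x‖ ^ 2 := hu.sum_inner_products_le x

theorem orthonormal_support_inv_norm_smul {w : ι → E}
    (hw : Pairwise fun i j ↦ ⟪w i, w j⟫_𝕜 = 0) :
    Orthonormal 𝕜 fun i : {i // ((‖w i‖⁻¹ : ℝ) : 𝕜) • w i ≠ 0} ↦ ((‖w i‖⁻¹ : ℝ) : 𝕜) • w i := by
  classical
  rw [orthonormal_iff_ite]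
  rintro ⟨i, hi⟩ ⟨j, hj⟩
  split_ifs with hij
  · cases hij
    have : w i ≠ 0 := by rintro h; simp [h] at hi
    rw [inner_smul_left, inner_smul_right, inner_self_eq_norm_sq_to_K, RCLike.conj_ofReal,
      ← mul_assoc, ← RCLike.ofReal_mul, ← RCLike.ofReal_pow, ← RCLike.ofReal_mul,
      ← RCLike.ofReal_one, RCLike.ofReal_inj]
    field_simp
  · simp [inner_smul_left, inner_smul_right, hw (fun h ↦ hij (Subtype.ext h))]

theorem re_inner_inv_norm_smul_self (w : E) : RCLike.re ⟪((‖w‖⁻¹ : ℝ) : 𝕜) • w, w⟫_𝕜 = ‖w‖ := by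
  rcases eq_or_ne w 0 with rfl | hw
  · simp
  rw [inner_smul_left, inner_self_eq_norm_sq_to_K, RCLike.conj_ofReal, ← RCLike.ofReal_pow,
    ← RCLike.ofReal_mul, RCLike.ofReal_re]
  field_simp

theorem sqrt_sum_sq_norm_comp_apply_le [Fintype κ] [NormedAddCommGroup G] [InnerProductSpace 𝕜 G]
    (T : F →L[𝕜] G) (S : E →L[𝕜] F) (x : κ → E) :
    √(∑ j, ‖(T ∘L S) (x j)‖ ^ 2) ≤ ‖T‖ * √(∑ j, ‖S (x j)‖ ^ 2) := by
  rw [← Real.sqrt_sq (norm_nonneg T), ← Real.sqrt_mul (sq_nonneg _), Finset.mul_sum]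
  gcongr with j
  rw [← mul_pow]
  gcongr
  exact T.le_opNorm _

variable [Fintype ι] [Fintype κ] [CompleteSpace E] [CompleteSpace F]

open ContinuousLinearMap in
theorem sum_sq_norm_adjoint_apply_le (T : E →L[𝕜] F) (b : OrthonormalBasis κ 𝕜 E) {u : ι → F}
    (hu : Orthonormal 𝕜 fun i : {i // u i ≠ 0} ↦ u i) :
    ∑ i, ‖(T†) (u i)‖ ^ 2 ≤ ∑ j, ‖T (b j)‖ ^ 2 := by
  calc ∑ i, ‖(T†) (u i)‖ ^ 2 = ∑ j, ∑ i, ‖⟪u i, T (b j)⟫_𝕜‖ ^ 2 := by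
        rw [Finset.sum_comm]
        refine Finset.sum_congr rfl fun i _ ↦ ?_
        rw [← b.sum_sq_norm_inner_right]
        simp_rw [adjoint_inner_right, norm_inner_symm]
    _ ≤ ∑ j, ‖T (b j)‖ ^ 2 :=
        Finset.sum_le_sum fun j _ ↦ hu.sum_sq_norm_inner_le_of_support _

open ContinuousLinearMap in
theorem sum_re_inner_comp_adjoint_le (C D : E →L[𝕜] F) (b : OrthonormalBasis κ 𝕜 E)
    {u v : ι → F} (hu : Orthonormal 𝕜 fun i : {i // u i ≠ 0} ↦ u i)
    (hv : Orthonormal 𝕜 fun i : {i // v i ≠ 0} ↦ v i) :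
    ∑ i, RCLike.re ⟪u i, (C ∘L D†) (v i)⟫_𝕜 ≤ √(∑ j, ‖C (b j)‖ ^ 2) * √(∑ j, ‖D (b j)‖ ^ 2) :=
  calc _ ≤ ∑ i, ‖(C†) (u i)‖ * ‖(D†) (v i)‖ := Finset.sum_le_sum fun i _ ↦ by
          rw [ContinuousLinearMap.comp_apply, ← adjoint_inner_left]
          exact (RCLike.re_le_norm _).trans (norm_inner_le_norm _ _)
    _ ≤ √(∑ i, ‖(C†) (u i)‖ ^ 2) * √(∑ i, ‖(D†) (v i)‖ ^ 2) := Real.sum_mul_le_sqrt_mul_sqrt _ _ _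
    _ ≤ _ := by gcongr <;> exact sum_sq_norm_adjoint_apply_le _ b ‹_›

end InnerProductSpace

section Matrix

variable {𝕜 n : Type*} [RCLike 𝕜] [Fintype n] [DecidableEq n]

theorem sum_sq_norm_toEuclideanCLM_basisFun (A : Matrix n n 𝕜) :
    ∑ j, ‖toEuclideanCLM (𝕜 := 𝕜) A (EuclideanSpace.basisFun n 𝕜 j)‖ ^ 2
      = RCLike.re (Aᴴ * A).trace := by
  simp [EuclideanSpace.norm_sq_eq, trace, mul_apply, RCLike.conj_mul, mulVec_single]

theorem toEuclideanCLM_eigenvectorBasis {A : Matrix n n 𝕜} (hA : A.IsHermitian) (j : n) :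
    toEuclideanCLM (𝕜 := 𝕜) A (hA.eigenvectorBasis j)
      = (hA.eigenvalues j : 𝕜) • hA.eigenvectorBasis j := by
  apply WithLp.ofLp_injective
  rw [ofLp_toEuclideanCLM, hA.mulVec_eigenvectorBasis, WithLp.ofLp_smul,
    RCLike.real_smul_eq_coe_smul (K := 𝕜)]

theorem inner_toEuclideanCLM_apply_apply (A : Matrix n n 𝕜) (x y : EuclideanSpace 𝕜 n) :
    ⟪toEuclideanCLM (𝕜 := 𝕜) A x, toEuclideanCLM (𝕜 := 𝕜) A y⟫_𝕜
      = ⟪x, toEuclideanCLM (𝕜 := 𝕜) (Aᴴ * A) y⟫_𝕜 := by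
  rw [map_mul, ← star_eq_conjTranspose, map_star, ContinuousLinearMap.star_eq_adjoint,
    mul_apply_eq_comp, ContinuousLinearMap.adjoint_inner_right]

theorem inner_toEuclideanCLM_eigenvectorBasis (A : Matrix n n 𝕜) (i j : n) :
    ⟪toEuclideanCLM (𝕜 := 𝕜) A ((isHermitian_conjTranspose_mul_self A).eigenvectorBasis i),
      toEuclideanCLM (𝕜 := 𝕜) A ((isHermitian_conjTranspose_mul_self A).eigenvectorBasis j)⟫_𝕜
      = if i = j then ((isHermitian_conjTranspose_mul_self A).eigenvalues i : 𝕜) else 0 := by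
  rw [inner_toEuclideanCLM_apply_apply, toEuclideanCLM_eigenvectorBasis, inner_smul_right,
    orthonormal_iff_ite.mp (OrthonormalBasis.orthonormal _)]
  split_ifs with h <;> simp [h]

theorem norm_toEuclideanCLM_eigenvectorBasis (A : Matrix n n 𝕜) (i : n) :
    ‖toEuclideanCLM (𝕜 := 𝕜) A ((isHermitian_conjTranspose_mul_self A).eigenvectorBasis i)‖
      = √((isHermitian_conjTranspose_mul_self A).eigenvalues i) := by
  rw [← Real.sqrt_sq (norm_nonneg _), ← @inner_self_eq_norm_sq 𝕜,
    inner_toEuclideanCLM_eigenvectorBasis, if_pos rfl, RCLike.ofReal_re]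

end Matrix

section TraceNorm

variable {n : Type*} [Fintype n] [DecidableEq n]

theorem traceNorm_eq_sum_sqrt_eigenvalues (A : Matrix n n ℂ) :
    traceNorm A = ∑ i, √((isHermitian_conjTranspose_mul_self A).eigenvalues i) := by
  rw [traceNorm, trace_mul_cycle, Matrix.UnitaryGroup.star_mul_self, one_mul, trace_diagonal,
    Complex.re_sum]
  simp

noncomputable def reInnerPairing (u v : n → EuclideanSpace ℂ n) : Matrix n n ℂ →ₗ[ℝ] ℝ where
  toFun A := ∑ i, RCLike.re ⟪u i, toEuclideanCLM (𝕜 := ℂ) A (v i)⟫_ℂ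
  map_add' A B := by simp [Finset.sum_add_distrib]
  map_smul' r A := by simp [← Complex.coe_smul, Finset.mul_sum]

theorem reInnerPairing_apply (u v : n → EuclideanSpace ℂ n) (A : Matrix n n ℂ) :
    reInnerPairing u v A = ∑ i, RCLike.re ⟪u i, toEuclideanCLM (𝕜 := ℂ) A (v i)⟫_ℂ :=
  rfl

theorem exists_traceNorm_eq_reInnerPairing (A : Matrix n n ℂ) :
    ∃ u v : n → EuclideanSpace ℂ n, (Orthonormal ℂ fun i : {i // u i ≠ 0} ↦ u i) ∧
      (Orthonormal ℂ fun i : {i // v i ≠ 0} ↦ v i) ∧ traceNorm A = reInnerPairing u v A := by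
  let v := (isHermitian_conjTranspose_mul_self A).eigenvectorBasis
  let w i := toEuclideanCLM (𝕜 := ℂ) A (v i)
  refine ⟨fun i ↦ ((‖w i‖⁻¹ : ℝ) : ℂ) • w i, v, orthonormal_support_inv_norm_smul fun i j hij ↦ ?_,
    v.orthonormal.comp _ Subtype.val_injective, ?_⟩
  · simpa [hij] using inner_toEuclideanCLM_eigenvectorBasis A i j
  · rw [traceNorm_eq_sum_sqrt_eigenvalues, reInnerPairing_apply]
    refine Finset.sum_congr rfl fun i _ ↦ ?_
    rw [← norm_toEuclideanCLM_eigenvectorBasis]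
    exact (re_inner_inv_norm_smul_self _).symm

open scoped MatrixOrder in
theorem reInnerPairing_mul_mul_conjTranspose_le {u v : n → EuclideanSpace ℂ n}
    (hu : Orthonormal ℂ fun i : {i // u i ≠ 0} ↦ u i)
    (hv : Orthonormal ℂ fun i : {i // v i ≠ 0} ↦ v i) (X Y : Matrix n n ℂ) {ρ : Matrix n n ℂ}
    (hρ : ρ.PosSemidef) :
    reInnerPairing u v (X * ρ * Yᴴ) ≤ opNorm X * opNorm Y * ρ.trace.re := by
  set σ := CFC.sqrt ρ
  have hσ : σᴴ = σ := (CFC.sqrt_nonneg ρ).posSemidef.1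
  have hσσ : σ * σ = ρ := CFC.sqrt_mul_sqrt_self ρ hρ.nonneg
  set e := EuclideanSpace.basisFun n ℂ
  have htrace : ∑ j, ‖toEuclideanCLM (𝕜 := ℂ) σ (e j)‖ ^ 2 = ρ.trace.re := by
    rw [sum_sq_norm_toEuclideanCLM_basisFun, hσ, hσσ]
    rfl
  have hfactor : toEuclideanCLM (𝕜 := ℂ) (X * ρ * Yᴴ)
      = toEuclideanCLM (𝕜 := ℂ) (X * σ) ∘L (toEuclideanCLM (𝕜 := ℂ) (Y * σ))† := by
    rw [← ContinuousLinearMap.star_eq_adjoint, ← map_star, star_eq_conjTranspose,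
      conjTranspose_mul, hσ, ← ContinuousLinearMap.mul_def, ← map_mul, ← hσσ]
    simp only [Matrix.mul_assoc]
  have hbound (Z : Matrix n n ℂ) : √(∑ j, ‖toEuclideanCLM (𝕜 := ℂ) (Z * σ) (e j)‖ ^ 2)
      ≤ opNorm Z * √(ρ.trace.re) := by
    rw [map_mul, ← htrace]
    exact sqrt_sum_sq_norm_comp_apply_le _ _ _
  calc reInnerPairing u v (X * ρ * Yᴴ)
      ≤ √(∑ j, ‖toEuclideanCLM (𝕜 := ℂ) (X * σ) (e j)‖ ^ 2) *
          √(∑ j, ‖toEuclideanCLM (𝕜 := ℂ) (Y * σ) (e j)‖ ^ 2) := by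
        rw [reInnerPairing_apply, hfactor]
        exact sum_re_inner_comp_adjoint_le _ _ e hu hv
    _ ≤ (opNorm X * √(ρ.trace.re)) * (opNorm Y * √(ρ.trace.re)) :=
        mul_le_mul (hbound X) (hbound Y) (Real.sqrt_nonneg _)
          (mul_nonneg (norm_nonneg _) (Real.sqrt_nonneg _))
    _ = opNorm X * opNorm Y * ρ.trace.re := by
        rw [mul_mul_mul_comm, Real.mul_self_sqrt (htrace ▸ by positivity)]

end TraceNorm

theorem sum_smul_mul_mul_conjTranspose_sub {ι m k : Type*} [Fintype ι] [Fintype k]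
    (p : ι → ℝ) (hp1 : ∑ j, p j = 1) (R : ι → Matrix m k ℂ) (S : Matrix m k ℂ)
    (ρ : Matrix k k ℂ) :
    ∑ j, (p j : ℂ) • (R j * ρ * (R j)ᴴ) - S * ρ * Sᴴ
      = ∑ j, (p j : ℂ) • ((R j - S) * ρ * (R j - S)ᴴ)
        + (∑ j, (p j : ℂ) • R j - S) * ρ * Sᴴ + S * ρ * (∑ j, (p j : ℂ) • R j - S)ᴴ := by
  have hp1' : ∑ j, (p j : ℂ) = 1 := by exact_mod_cast hp1
  have hmean : ∑ j, (p j : ℂ) • R j - S = ∑ j, (p j : ℂ) • (R j - S) := by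
    rw [Finset.sum_congr rfl fun j _ ↦ smul_sub (p j : ℂ) (R j) S, Finset.sum_sub_distrib,
      ← Finset.sum_smul, hp1', one_smul]
  have hconst : S * ρ * Sᴴ = ∑ j, (p j : ℂ) • (S * ρ * Sᴴ) := by
    rw [← Finset.sum_smul, hp1', one_smul]
  rw [hmean, hconst, ← Finset.sum_sub_distrib, conjTranspose_sum, Matrix.sum_mul, Matrix.sum_mul,
    Matrix.mul_sum, ← Finset.sum_add_distrib, ← Finset.sum_add_distrib]
  refine Finset.sum_congr rfl fun j _ ↦ ?_
  simp only [conjTranspose_smul, conjTranspose_sub, Complex.star_def, Complex.conj_ofReal,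
    Matrix.smul_mul, Matrix.mul_smul, Matrix.sub_mul, Matrix.mul_sub, smul_sub]
  abel

/-- Generalized mixing lemma for possibly non-unitary evolution. -/
theorem generalized_mixing_lemma {N m : ℕ} (S : Matrix (Fin N) (Fin N) ℂ)
    (R : Fin m → Matrix (Fin N) (Fin N) ℂ)
    (p : Fin m → ℝ) (hp : ∀ j, 0 ≤ p j) (hp1 : ∑ j, p j = 1)
    (a b : ℝ)
    (ha : ∀ j, opNorm (R j - S) ≤ a)
    (hb : opNorm ((∑ j, (p j : ℂ) • R j) - S) ≤ b)
    (ρ : Matrix (Fin N) (Fin N) ℂ) (hρ : ρ.PosSemidef) (hρ1 : ρ.trace = 1) :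
    traceNorm ((∑ j, (p j : ℂ) • (R j * ρ * (R j)ᴴ)) - S * ρ * Sᴴ)
      ≤ a ^ 2 + 2 * b * opNorm S := by
  obtain ⟨u, v, hu, hv, hnorm⟩ :=
    exists_traceNorm_eq_reInnerPairing ((∑ j, (p j : ℂ) • (R j * ρ * (R j)ᴴ)) - S * ρ * Sᴴ)
  have hpair (X Y : Matrix (Fin N) (Fin N) ℂ) :
      reInnerPairing u v (X * ρ * Yᴴ) ≤ opNorm X * opNorm Y := by
    simpa [hρ1] using reInnerPairing_mul_mul_conjTranspose_le hu hv X Y hρ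
  have hdiag : ∑ j, reInnerPairing u v ((p j : ℂ) • ((R j - S) * ρ * (R j - S)ᴴ)) ≤ a ^ 2 :=
    calc _ ≤ ∑ j, p j * a ^ 2 := Finset.sum_le_sum fun j _ ↦ by
          rw [Complex.coe_smul, map_smul, smul_eq_mul, sq]
          exact mul_le_mul_of_nonneg_left
            ((hpair _ _).trans (mul_self_le_mul_self (norm_nonneg _) (ha j))) (hp j)
      _ = a ^ 2 := by rw [← Finset.sum_mul, hp1, one_mul]
  have hS : 0 ≤ opNorm S := norm_nonneg _
  rw [hnorm, sum_smul_mul_mul_conjTranspose_sub p hp1 R S ρ, map_add, map_add, map_sum]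
  linarith [hpair (∑ j, (p j : ℂ) • R j - S) S, hpair S (∑ j, (p j : ℂ) • R j - S),
    mul_le_mul_of_nonneg_right hb hS, mul_le_mul_of_nonneg_left hb hS]
end

section
/- Let S, R_1,...,R_m be operators with ‖S‖ ≤ 1, a probability distribution p_1,...,p_m, and constants a,b ≥ 0 such that ‖R_j − S‖ ≤ a for all j and ‖∑_j p_j R_j − S‖ ≤ b. Then for every density matrix ρ, ‖∑_j p_j R_j ρ R_j† − S ρ S†‖₁ ≤ a² + 2b. -/
open Matrix
open scoped ComplexOrder

/-!
Write `Δ = ∑ⱼ pⱼ Rⱼ - S`. Expanding around `S` gives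
`∑ⱼ pⱼ Rⱼ ρ Rⱼ† - S ρ S† = P + (Δ ρ S† + S ρ Δ†)` with `P = ∑ⱼ pⱼ (Rⱼ - S) ρ (Rⱼ - S)†` positive
and of trace at most `a²`. For every `t > 0` the matrix `M = P + t Δ ρ Δ† + t⁻¹ S ρ S†` dominates
the difference `X` from both sides, since `M - X` and `M + X - 2P` are `E ρ E†` for
`E = √t Δ ∓ S / √t`. In the eigenbasis of `X` this gives
`‖X‖₁ ≤ tr M ≤ a² + t ‖Δ‖² + t⁻¹ ‖S‖²`, and optimising over `t` gives `a² + 2 ‖Δ‖ ‖S‖ ≤ a² + 2b`.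
-/

open Filter Topology in
lemma le_two_mul_mul_mul_of_forall_pos {x y r z : ℝ} (hx : 0 ≤ x) (hy : 0 ≤ y) (hr : 0 ≤ r)
    (h : ∀ t : ℝ, 0 < t → z ≤ (t * x ^ 2 + t⁻¹ * y ^ 2) * r) : z ≤ 2 * x * y * r := by
  have hε : ∀ ε : ℝ, 0 < ε → z ≤ (2 * x * y + ε * (x + y)) * r := by
    intro ε hε
    -- `t = y / x` is optimal; the shift by `ε` also covers `x = 0` and `y = 0`.
    refine (h ((y + ε) / (x + ε)) (by positivity)).trans (mul_le_mul_of_nonneg_right ?_ hr)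
    have h₁ : (y + ε) / (x + ε) * x ^ 2 ≤ (y + ε) * x := by
      rw [div_mul_eq_mul_div, div_le_iff₀ (by positivity)]
      nlinarith [show 0 ≤ (y + ε) * x * ε by positivity]
    have h₂ : (x + ε) / (y + ε) * y ^ 2 ≤ (x + ε) * y := by
      rw [div_mul_eq_mul_div, div_le_iff₀ (by positivity)]
      nlinarith [show 0 ≤ (x + ε) * y * ε by positivity]
    rw [inv_div]
    linarith
  have hcont : Continuous fun ε : ℝ => (2 * x * y + ε * (x + y)) * r := by fun_prop
  have hlim : Tendsto (fun ε : ℝ => (2 * x * y + ε * (x + y)) * r) (𝓝[>] 0)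
      (𝓝 (2 * x * y * r)) :=
    tendsto_nhdsWithin_of_tendsto_nhds (by simpa using hcont.tendsto 0)
  exact ge_of_tendsto hlim (eventually_nhdsWithin_of_forall hε)

section

variable {n : Type*} [Fintype n]

lemma posSemidef_smul_conj_add_smul_conj_add_cross {ρ : Matrix n n ℂ} (hρ : ρ.PosSemidef)
    (A B : Matrix n n ℂ) {t : ℝ} (ht : 0 < t) :
    (t • (A * ρ * Aᴴ) + t⁻¹ • (B * ρ * Bᴴ) + (A * ρ * Bᴴ + B * ρ * Aᴴ)).PosSemidef := by
  have hs : √t * √t = t := Real.mul_self_sqrt ht.le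
  have hs' : √t ≠ 0 := (Real.sqrt_pos.mpr ht).ne'
  have hE : t • (A * ρ * Aᴴ) + t⁻¹ • (B * ρ * Bᴴ) + (A * ρ * Bᴴ + B * ρ * Aᴴ) =
      (√t • A + (√t)⁻¹ • B) * ρ * (√t • A + (√t)⁻¹ • B)ᴴ := by
    simp only [conjTranspose_add, conjTranspose_smul, star_trivial, add_mul, mul_add,
      Matrix.smul_mul, Matrix.mul_smul, smul_smul, ← mul_inv, hs,
      inv_mul_cancel₀ hs', mul_inv_cancel₀ hs', one_smul]
    abel
  rw [hE]
  exact hρ.mul_mul_conjTranspose_same _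

lemma posSemidef_smul_conj_add_smul_conj_sub_cross {ρ : Matrix n n ℂ} (hρ : ρ.PosSemidef)
    (A B : Matrix n n ℂ) {t : ℝ} (ht : 0 < t) :
    (t • (A * ρ * Aᴴ) + t⁻¹ • (B * ρ * Bᴴ) - (A * ρ * Bᴴ + B * ρ * Aᴴ)).PosSemidef := by
  convert posSemidef_smul_conj_add_smul_conj_add_cross hρ A (-B) ht using 1
  simp only [conjTranspose_neg, neg_mul, mul_neg, neg_neg]
  abel

lemma sum_smul_conj_sub_conj_eq {ι : Type*} [Fintype ι] (S ρ : Matrix n n ℂ)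
    (R : ι → Matrix n n ℂ) (p : ι → ℝ) (hp1 : ∑ j, p j = 1) :
    ∑ j, (p j : ℂ) • (R j * ρ * (R j)ᴴ) - S * ρ * Sᴴ =
      ∑ j, (p j : ℂ) • ((R j - S) * ρ * (R j - S)ᴴ) +
        (((∑ j, (p j : ℂ) • R j) - S) * ρ * Sᴴ + S * ρ * ((∑ j, (p j : ℂ) • R j) - S)ᴴ) := by
  have hw : ∑ j, (p j : ℂ) = 1 := by exact_mod_cast hp1
  simp only [conjTranspose_sub, conjTranspose_sum, conjTranspose_smul, Complex.star_def,
    Complex.conj_ofReal, sub_mul, mul_sub, smul_sub, Finset.sum_sub_distrib, Finset.sum_mul,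
    Finset.mul_sum, Matrix.smul_mul, Matrix.mul_smul, ← Finset.sum_smul, hw, one_smul]
  abel

lemma Matrix.PosSemidef.trace_re_nonneg {ρ : Matrix n n ℂ} (hρ : ρ.PosSemidef) :
    0 ≤ ρ.trace.re :=
  (Complex.nonneg_iff.mp hρ.trace_nonneg).1

variable [DecidableEq n]

open scoped Matrix.Norms.L2Operator MatrixOrder

lemma opNorm_nonneg (A : Matrix n n ℂ) : 0 ≤ opNorm A := norm_nonneg _

lemma re_trace_mul_mul_conjTranspose_le {ρ : Matrix n n ℂ} (hρ : ρ.PosSemidef)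
    (B : Matrix n n ℂ) :
    (B * ρ * Bᴴ).trace.re ≤ opNorm B ^ 2 * ρ.trace.re := by
  obtain ⟨s, hs, rfl⟩ : ∃ s : Matrix n n ℂ, IsSelfAdjoint s ∧ ρ = s * s :=
    ⟨CFC.sqrt ρ, (CFC.sqrt_nonneg ρ).isSelfAdjoint, (CFC.sqrt_mul_sqrt_self ρ hρ.nonneg).symm⟩
  have h : s * (Bᴴ * B) * s ≤ s * algebraMap ℝ _ (opNorm B ^ 2) * s :=
    hs.conjugate_le_conjugate CStarAlgebra.star_mul_le_algebraMap_norm_sq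
  have hcycle : (B * (s * s) * Bᴴ).trace = (s * (Bᴴ * B) * s).trace := by
    rw [Matrix.trace_mul_cycle, Matrix.trace_mul_cycle s, Matrix.trace_mul_comm, Matrix.mul_assoc]
  have := (Complex.nonneg_iff.mp (Matrix.le_iff.mp h).trace_nonneg).1
  rw [Algebra.algebraMap_eq_smul_one, Matrix.mul_smul, Matrix.smul_mul, Matrix.mul_one,
    Matrix.trace_sub, Matrix.trace_smul, Complex.sub_re, Complex.smul_re, smul_eq_mul,
    sub_nonneg] at this
  rwa [hcycle]

lemma traceNorm_eq_re_trace_cfc_sqrt (A : Matrix n n ℂ) :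
    traceNorm A = (cfc Real.sqrt (Aᴴ * A)).trace.re := by
  rw [(posSemidef_conjTranspose_mul_self A).1.cfc_eq]; rfl

lemma Matrix.IsHermitian.trace_cfc {𝕜 : Type*} [RCLike 𝕜] {A : Matrix n n 𝕜}
    (hA : A.IsHermitian) (f : ℝ → ℝ) :
    (cfc f A).trace = ∑ i, (f (hA.eigenvalues i) : 𝕜) := by
  rw [hA.cfc_eq, IsHermitian.cfc, Unitary.conjStarAlgAut_apply, trace_mul_cycle,
    Unitary.coe_star_mul_self, one_mul, trace_diagonal]
  rfl

lemma traceNorm_eq_sum_abs_eigenvalues {X : Matrix n n ℂ} (hX : X.IsHermitian) :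
    traceNorm X = ∑ i, |hX.eigenvalues i| := by
  have hsq : Xᴴ * X = cfc (fun x : ℝ => x * x) X := by
    rw [cfc_mul (fun x : ℝ => x) (fun x : ℝ => x) X, cfc_id' ℝ X, hX.eq]
  rw [traceNorm_eq_re_trace_cfc_sqrt, hsq, ← cfc_comp' Real.sqrt (fun x : ℝ => x * x) X,
    hX.trace_cfc]
  simp [Real.sqrt_mul_self_eq_abs]

lemma traceNorm_le_re_trace_of_posSemidef_sub_of_posSemidef_add {X M : Matrix n n ℂ}
    (hX : X.IsHermitian) (hsub : (M - X).PosSemidef) (hadd : (M + X).PosSemidef) :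
    traceNorm X ≤ M.trace.re := by
  set U : Matrix n n ℂ := ↑hX.eigenvectorUnitary
  set Φ := Unitary.conjStarAlgAut ℂ (Matrix n n ℂ) (star hX.eigenvectorUnitary)
  have hΦ : ∀ Y, Φ Y = star U * Y * (star U)ᴴ := fun Y => rfl
  have hΦX : Φ X = diagonal (RCLike.ofReal ∘ hX.eigenvalues) :=
    hX.conjStarAlgAut_star_eigenvectorUnitary
  have habs : ∀ i, |hX.eigenvalues i| ≤ (Φ M i i).re := by
    intro i
    have h₁ := Complex.nonneg_iff.mp
      (hsub.mul_mul_conjTranspose_same (star U) |>.diag_nonneg (i := i))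
    have h₂ := Complex.nonneg_iff.mp
      (hadd.mul_mul_conjTranspose_same (star U) |>.diag_nonneg (i := i))
    simp only [← hΦ, map_sub, map_add, hΦX, Matrix.sub_apply, Matrix.add_apply,
      diagonal_apply_eq, Complex.sub_re, Complex.add_re, RCLike.ofReal_eq_complex_ofReal,
      Function.comp_apply, Complex.ofReal_re] at h₁ h₂
    rw [abs_le]
    constructor <;> linarith [h₁.1, h₂.1]
  have htrace : (Φ M).trace = M.trace := by
    rw [hΦ, trace_mul_cycle, ← star_eq_conjTranspose, star_star,
      Unitary.mul_star_self_of_mem hX.eigenvectorUnitary.2, Matrix.one_mul]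
  rw [traceNorm_eq_sum_abs_eigenvalues hX, ← htrace, trace, Complex.re_sum]
  exact Finset.sum_le_sum fun i _ => habs i

lemma traceNorm_add_cross_le {P ρ : Matrix n n ℂ} (hP : P.PosSemidef) (hρ : ρ.PosSemidef)
    (A B : Matrix n n ℂ) :
    traceNorm (P + (A * ρ * Bᴴ + B * ρ * Aᴴ)) ≤
      P.trace.re + 2 * opNorm A * opNorm B * ρ.trace.re := by
  set Y := A * ρ * Bᴴ + B * ρ * Aᴴ
  have hY : Y.IsHermitian := by
    simp only [Y, IsHermitian, conjTranspose_add, conjTranspose_mul, conjTranspose_conjTranspose,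
      hρ.1.eq, Matrix.mul_assoc, add_comm]
  suffices h : ∀ t : ℝ, 0 < t →
      traceNorm (P + Y) - P.trace.re ≤ (t * opNorm A ^ 2 + t⁻¹ * opNorm B ^ 2) * ρ.trace.re by
    linarith [le_two_mul_mul_mul_of_forall_pos (opNorm_nonneg A) (opNorm_nonneg B)
      hρ.trace_re_nonneg h]
  intro t ht
  set M := P + (t • (A * ρ * Aᴴ) + t⁻¹ • (B * ρ * Bᴴ))
  have hsub : (M - (P + Y)).PosSemidef := by
    convert posSemidef_smul_conj_add_smul_conj_sub_cross hρ A B ht using 1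
    simp only [M, Y]
    abel
  have hadd : (M + (P + Y)).PosSemidef := by
    convert (hP.add hP).add (posSemidef_smul_conj_add_smul_conj_add_cross hρ A B ht) using 1
    simp only [M, Y]
    abel
  have hM : M.trace.re ≤
      P.trace.re + (t * opNorm A ^ 2 + t⁻¹ * opNorm B ^ 2) * ρ.trace.re := by
    simp only [M, trace_add, trace_smul, Complex.add_re, Complex.smul_re, smul_eq_mul]
    nlinarith [re_trace_mul_mul_conjTranspose_le hρ A, re_trace_mul_mul_conjTranspose_le hρ B,
      inv_pos.mpr ht]
  linarith [traceNorm_le_re_trace_of_posSemidef_sub_of_posSemidef_add (hP.1.add hY) hsub hadd]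

lemma re_trace_sum_smul_mul_mul_conjTranspose_le {ι : Type*} [Fintype ι] {ρ : Matrix n n ℂ}
    (hρ : ρ.PosSemidef) (D : ι → Matrix n n ℂ) (p : ι → ℝ) (hp : ∀ j, 0 ≤ p j)
    (hp1 : ∑ j, p j = 1) {a : ℝ} (ha : ∀ j, opNorm (D j) ≤ a) :
    (∑ j, (p j : ℂ) • (D j * ρ * (D j)ᴴ)).trace.re ≤ a ^ 2 * ρ.trace.re := by
  simp only [trace_sum, trace_smul, Complex.re_sum, smul_eq_mul, Complex.re_ofReal_mul]
  calc ∑ j, p j * (D j * ρ * (D j)ᴴ).trace.re ≤ ∑ j, p j * (a ^ 2 * ρ.trace.re) := by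
        refine Finset.sum_le_sum fun j _ => mul_le_mul_of_nonneg_left ?_ (hp j)
        exact (re_trace_mul_mul_conjTranspose_le hρ _).trans <| mul_le_mul_of_nonneg_right
          (pow_le_pow_left₀ (opNorm_nonneg _) (ha j) 2) hρ.trace_re_nonneg
    _ = a ^ 2 * ρ.trace.re := by rw [← Finset.sum_mul, hp1, one_mul]

end

theorem mixing_lemma_contraction_general {N m : ℕ} (S : Matrix (Fin N) (Fin N) ℂ)
    (hS : opNorm S ≤ 1)
    (R : Fin m → Matrix (Fin N) (Fin N) ℂ)
    (p : Fin m → ℝ) (hp : ∀ j, 0 ≤ p j) (hp1 : ∑ j, p j = 1)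
    (a b : ℝ)
    (ha : ∀ j, opNorm (R j - S) ≤ a)
    (hb : opNorm ((∑ j, (p j : ℂ) • R j) - S) ≤ b)
    (ρ : Matrix (Fin N) (Fin N) ℂ) (hρ : ρ.PosSemidef) (hρ1 : ρ.trace = 1) :
    traceNorm ((∑ j, (p j : ℂ) • (R j * ρ * (R j)ᴴ)) - S * ρ * Sᴴ) ≤ a ^ 2 + 2 * b := by
  have hρtr : ρ.trace.re = 1 := by rw [hρ1, Complex.one_re]
  have hP : (∑ j, (p j : ℂ) • ((R j - S) * ρ * (R j - S)ᴴ)).PosSemidef :=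
    posSemidef_sum _ fun j _ =>
      (hρ.mul_mul_conjTranspose_same _).smul (Complex.zero_le_real.mpr (hp j))
  rw [sum_smul_conj_sub_conj_eq S ρ R p hp1]
  calc _ ≤ _ := traceNorm_add_cross_le hP hρ _ _
    _ ≤ a ^ 2 + 2 * (b * 1) := by
      rw [hρtr, mul_one, mul_assoc]
      refine add_le_add ?_ (mul_le_mul_of_nonneg_left ?_ zero_le_two)
      · simpa [hρtr] using re_trace_sum_smul_mul_mul_conjTranspose_le hρ _ p hp hp1 ha
      · exact mul_le_mul hb hS (opNorm_nonneg S) ((opNorm_nonneg _).trans hb)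
    _ = a ^ 2 + 2 * b := by ring

/-- Mixing lemma for contractions (‖S‖ ≤ 1). -/
theorem mixing_lemma_contraction {N m : ℕ} (S : Matrix (Fin N) (Fin N) ℂ)
    (hS : opNorm S ≤ 1)
    (R : Fin m → Matrix (Fin N) (Fin N) ℂ)
    (p : Fin m → ℝ) (hp : ∀ j, 0 ≤ p j) (hp1 : ∑ j, p j = 1)
    (a b : ℝ) (ha0 : 0 ≤ a) (hb0 : 0 ≤ b)
    (ha : ∀ j, opNorm (R j - S) ≤ a)
    (hb : opNorm ((∑ j, (p j : ℂ) • R j) - S) ≤ b)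
    (ρ : Matrix (Fin N) (Fin N) ℂ) (hρ : ρ.PosSemidef) (hρ1 : ρ.trace = 1) :
    traceNorm ((∑ j, (p j : ℂ) • (R j * ρ * (R j)ᴴ)) - S * ρ * Sᴴ) ≤ a ^ 2 + 2 * b :=
  mixing_lemma_contraction_general S hS R p hp hp1 a b ha hb ρ hρ hρ1
end
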